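/- arXiv:1910.05987 — 2 statements merged into one kernel-verified Lean document; each statement's English description precedes it below -/
import Mathlib

section
/- Fix a_0, …, a_d ∈ ℤ and A, B ∈ GL_d(ℚ_p), and set γ(A,B) = Σ_{i=0}^d a_i · m_{A:i,B:d−i}. Then the following are equivalent: (i) γ(AT, BT) = γ(A,B) for every T ∈ GL_d(ℚ_p); (ii) γ(AT, BT) = γ(A,B) for some T ∈ GL_d(ℚ_p) with ν(det T) ≠ 0; (iii) Σ_{i=0}^d a_i = 0. -/
open Pointwise

namespace BT

variable (p : ℕ) [Fact p.Prime] (d : ℕ)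

/-- A `ℤ_[p]`-lattice in `ℚ_[p]^d`: a finitely generated `ℤ_[p]`-submodule that
spans `ℚ_[p]^d` over `ℚ_[p]`. -/
def IsLattice (L : Submodule ℤ_[p] (Fin d → ℚ_[p])) : Prop :=
  L.FG ∧ Submodule.span ℚ_[p] (L : Set (Fin d → ℚ_[p])) = ⊤

/-- Two submodules are homothetic if one is a nonzero scalar multiple of the other. -/
def Homothetic (L L' : Submodule ℤ_[p] (Fin d → ℚ_[p])) : Prop :=
  ∃ c : ℚ_[p], c ≠ 0 ∧ (L' : Set (Fin d → ℚ_[p])) = c • (L : Set (Fin d → ℚ_[p]))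

theorem homothetic_equivalence : Equivalence (Homothetic p d) where
  refl := fun L => ⟨1, one_ne_zero, (one_smul ℚ_[p] (L : Set (Fin d → ℚ_[p]))).symm⟩
  symm := by
    rintro L L' ⟨c, hc, h⟩
    exact ⟨c⁻¹, inv_ne_zero hc, by rw [h, inv_smul_smul₀ hc]⟩
  trans := by
    rintro L L' L'' ⟨c, hc, h⟩ ⟨c', hc', h'⟩
    exact ⟨c' * c, mul_ne_zero hc' hc, by rw [h', h, smul_smul]⟩

def BTSetoid : Setoid (Submodule ℤ_[p] (Fin d → ℚ_[p])) :=
  ⟨Homothetic p d, homothetic_equivalence p d⟩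

/-- Vertices of the Bruhat–Tits building: homothety classes of submodules
(the building proper consists of the classes of lattices). -/
def Vertex := Quotient (BTSetoid p d)

/-- `A_v`: the homothety class of the `ℤ_[p]`-span of the rows of `A`. -/
noncomputable def vertexOf (A : Matrix (Fin d) (Fin d) ℚ_[p]) : Vertex p d :=
  Quotient.mk (BTSetoid p d) (Submodule.span ℤ_[p] (Set.range fun i => A i))

/-- One half of the adjacency relation: there are lattice representatives
`L ⊋ L' ⊋ pL`. -/
def AdjHalf (x y : Vertex p d) : Prop :=
  ∃ L L' : Submodule ℤ_[p] (Fin d → ℚ_[p]),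
    IsLattice p d L ∧ IsLattice p d L' ∧
    x = Quotient.mk (BTSetoid p d) L ∧ y = Quotient.mk (BTSetoid p d) L' ∧
    (L' : Set (Fin d → ℚ_[p])) ⊂ (L : Set (Fin d → ℚ_[p])) ∧
    (p : ℚ_[p]) • (L : Set (Fin d → ℚ_[p])) ⊂ (L' : Set (Fin d → ℚ_[p]))

/-- The 1-skeleton of the Bruhat–Tits building of `SL_d(ℚ_p)` as a simple graph. -/
def Graph : SimpleGraph (Vertex p d) where
  Adj x y := x ≠ y ∧ (AdjHalf p d x y ∨ AdjHalf p d y x)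
  symm := ⟨fun x y h => ⟨h.1.symm, h.2.symm⟩⟩
  loopless := ⟨fun x h => h.1 rfl⟩

/-- An `(A:i, B:d−i)`-candidate: a matrix whose rows are `i` pairwise distinct rows
of `A` and `d − i` pairwise distinct rows of `B`. -/
def IsCandidate (i : ℕ) (A B X : Matrix (Fin d) (Fin d) ℚ_[p]) : Prop :=
  ∃ (S : Finset (Fin d)) (ρ : Fin d → Fin d),
    S.card = i ∧ Set.InjOn ρ ↑S ∧ Set.InjOn ρ ↑Sᶜ ∧
    ∀ j, X j = if j ∈ S then A (ρ j) else B (ρ j)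

/-- `m_{A:i,B:d−i}`: the minimal valuation of the determinant of an
`(A:i, B:d−i)`-candidate with nonzero determinant. -/
noncomputable def mVal (i : ℕ) (A B : Matrix (Fin d) (Fin d) ℚ_[p]) : ℤ :=
  sInf {v : ℤ | ∃ X : Matrix (Fin d) (Fin d) ℚ_[p],
    IsCandidate p d i A B X ∧ X.det ≠ 0 ∧ v = X.det.valuation}

/-- Membership in `GL_d(ℤ_p)` (as a matrix over `ℚ_p`): integral entries and
determinant a unit of `ℤ_p`. -/
def InGLZp (X : Matrix (Fin d) (Fin d) ℚ_[p]) : Prop :=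
  (∀ i j, ‖X i j‖ ≤ 1) ∧ ‖X.det‖ = 1


section Aux

variable (p : ℕ) [Fact p.Prime] (d : ℕ)

open Matrix in
lemma rowsLI {A : Matrix (Fin d) (Fin d) ℚ_[p]} (hA : A.det ≠ 0) :
    LinearIndependent ℚ_[p] (fun j => A j) :=
  Matrix.linearIndependent_rows_iff_isUnit.2 ((Matrix.isUnit_iff_isUnit_det A).2 hA.isUnit)

lemma rows_span_top (hd' : 0 < d) {A : Matrix (Fin d) (Fin d) ℚ_[p]} (hA : A.det ≠ 0) :
    Submodule.span ℚ_[p] (Set.range fun j => A j) = ⊤ := by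
  haveI : Nonempty (Fin d) := Fin.pos_iff_nonempty.mp hd'
  exact (rowsLI p d hA).span_eq_top_of_card_eq_finrank (by simp [Module.finrank_pi])

lemma exists_candidate (hd' : 0 < d) (i : ℕ) (hi : i ≤ d) (A B : Matrix (Fin d) (Fin d) ℚ_[p])
    (hA : A.det ≠ 0) (hB : B.det ≠ 0) :
    ∃ X : Matrix (Fin d) (Fin d) ℚ_[p], IsCandidate p d i A B X ∧ X.det ≠ 0 := by
  classical
  haveI : Nonempty (Fin d) := Fin.pos_iff_nonempty.mp hd'
  have hAli := rowsLI p d hA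
  have hBli := rowsLI p d hB
  have hAinj : Function.Injective (fun j => A j) := hAli.injective
  have hBinj : Function.Injective (fun j => B j) := hBli.injective
  set S : Finset (Fin d) := Finset.image (Fin.castLE hi) Finset.univ with hSdef
  have hScard : S.card = i := by
    rw [hSdef, Finset.card_image_of_injective _ (Fin.castLE_injective hi)]
    simp
  set sset : Set (Fin d → ℚ_[p]) := (fun j => A j) '' ↑S with hsset
  have hsli : LinearIndependent ℚ_[p] ((↑) : sset → (Fin d → ℚ_[p])) :=
    ((linearIndepOn_id_range_iff hAli.injective).2 hAli).mono (by rw [hsset]; exact Set.image_subset_range _ _)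
  obtain ⟨b, hbt, hsb, htb, hbli⟩ : ∃ b ⊆ sset ∪ Set.range (fun j => B j), sset ⊆ b ∧
      sset ∪ Set.range (fun j => B j) ⊆ Submodule.span ℚ_[p] b ∧
      LinearIndependent ℚ_[p] ((↑) : b → (Fin d → ℚ_[p])) :=
    exists_linearIndepOn_id_extension hsli
      (Set.subset_union_left (t := Set.range fun j => B j))
  have hspanb : Submodule.span ℚ_[p] b = ⊤ := by
    refine top_unique ?_
    rw [← rows_span_top p d hd' hB]
    exact (Submodule.span_le).2 (fun x hx => htb (Set.mem_union_right _ hx))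
  have hbfin : b.Finite := hbli.setFinite
  haveI : Fintype b := hbfin.fintype
  have hbcard : b.ncard = d := by
    have h1 := finrank_span_set_eq_card hbli
    rw [hspanb, finrank_top, Module.finrank_pi] at h1
    rw [Set.ncard_eq_toFinset_card' b, ← h1]
    simp
  have hscard : sset.ncard = i := by
    rw [hsset, Set.ncard_image_of_injective _ hAinj, Set.ncard_coe_finset, hScard]
  have hbfin' : (b \ sset).Finite := hbfin.subset Set.diff_subset
  haveI : Fintype ↥(b \ sset) := hbfin'.fintype
  have hucard : (b \ sset).ncard = d - i := by
    rw [Set.ncard_diff hsb (hbfin.subset hsb), hbcard, hscard]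
  have hcards : Fintype.card {x // x ∈ Sᶜ} = Fintype.card ↥(b \ sset) := by
    rw [Fintype.card_coe, Finset.card_compl, hScard, Fintype.card_fin,
      ← Nat.card_eq_fintype_card, Nat.card_coe_set_eq, hucard]
  let e : {x // x ∈ Sᶜ} ≃ ↥(b \ sset) := Fintype.equivOfCardEq hcards
  have hubr : b \ sset ⊆ Set.range fun j => B j := fun x hx => by
    rcases hbt hx.1 with h | h
    · exact absurd h hx.2
    · exact h
  set ι : (Fin d → ℚ_[p]) → Fin d := Function.invFun (fun j => B j) with hιdef
  have hBι : ∀ x ∈ b \ sset, B (ι x) = x := fun x hx => Function.invFun_eq (hubr hx)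
  set ρ : Fin d → Fin d := fun j => if h : j ∈ Sᶜ then ι ↑(e ⟨j, h⟩) else j with hρdef
  have hρS : ∀ j ∈ S, ρ j = j := fun j hj => by
    simp only [hρdef]
    exact dif_neg (fun h => (Finset.mem_compl.1 h) hj)
  have hρSc : ∀ j (h : j ∈ Sᶜ), B (ρ j) = ↑(e ⟨j, h⟩) := fun j h => by
    simp only [hρdef, dif_pos h]
    exact hBι _ (e ⟨j, h⟩).2
  set X : Matrix (Fin d) (Fin d) ℚ_[p] :=
    Matrix.of (fun j => if j ∈ S then A (ρ j) else B (ρ j)) with hXdef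
  have hXval : ∀ j, X j = if j ∈ S then A (ρ j) else B (ρ j) := fun j => rfl
  have hXS : ∀ j ∈ S, X j = A j := fun j hj => by
    rw [hXval, if_pos hj, hρS j hj]
  have hXSc : ∀ j (h : j ∈ Sᶜ), X j = ↑(e ⟨j, h⟩) := fun j h => by
    rw [hXval, if_neg (by simpa using h), hρSc j h]
  have hXmem : ∀ j, X j ∈ b := by
    intro j
    by_cases hj : j ∈ S
    · rw [hXS j hj]; exact hsb ⟨j, hj, rfl⟩
    · rw [hXSc j (Finset.mem_compl.2 hj)]
      exact (e ⟨j, Finset.mem_compl.2 hj⟩).2.1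
  have hXinj : Function.Injective (fun j => X j) := by
    intro j₁ j₂ hj
    simp only at hj
    by_cases h1 : j₁ ∈ S <;> by_cases h2 : j₂ ∈ S
    · rw [hXS j₁ h1, hXS j₂ h2] at hj; exact hAinj hj
    · exfalso
      rw [hXS j₁ h1, hXSc j₂ (Finset.mem_compl.2 h2)] at hj
      exact (e ⟨j₂, Finset.mem_compl.2 h2⟩).2.2 (hj ▸ ⟨j₁, h1, rfl⟩)
    · exfalso
      rw [hXSc j₁ (Finset.mem_compl.2 h1), hXS j₂ h2] at hj
      exact (e ⟨j₁, Finset.mem_compl.2 h1⟩).2.2 (hj ▸ ⟨j₂, h2, rfl⟩)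
    · rw [hXSc j₁ (Finset.mem_compl.2 h1), hXSc j₂ (Finset.mem_compl.2 h2)] at hj
      have := e.injective (Subtype.ext hj)
      exact congrArg Subtype.val this
  have hXli : LinearIndependent ℚ_[p] (fun j => X j) := by
    have hcomp : (fun j => X j) =
        ((↑) : b → (Fin d → ℚ_[p])) ∘ (fun j => (⟨X j, hXmem j⟩ : b)) := rfl
    rw [hcomp]
    exact hbli.comp _ (fun j₁ j₂ h => hXinj (congrArg Subtype.val h))
  have hXdet : X.det ≠ 0 := by
    have := Matrix.linearIndependent_rows_iff_isUnit.1 hXli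
    have := (Matrix.isUnit_iff_isUnit_det X).1 this
    exact this.ne_zero
  exact ⟨X, ⟨S, ρ, hScard,
    fun j₁ hj₁ j₂ hj₂ h => by rwa [hρS j₁ hj₁, hρS j₂ hj₂] at h,
    fun j₁ hj₁ j₂ hj₂ h => by
      have h1 : B (ρ j₁) = B (ρ j₂) := congrArg B h
      rw [hρSc j₁ hj₁, hρSc j₂ hj₂] at h1
      exact congrArg Subtype.val (e.injective (Subtype.ext h1)),
    hXval⟩, hXdet⟩

/-- The set of valuations of determinants of candidates. -/
def candSet (i : ℕ) (A B : Matrix (Fin d) (Fin d) ℚ_[p]) : Set ℤ :=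
  {v : ℤ | ∃ X : Matrix (Fin d) (Fin d) ℚ_[p],
    IsCandidate p d i A B X ∧ X.det ≠ 0 ∧ v = X.det.valuation}

lemma mVal_def (i : ℕ) (A B : Matrix (Fin d) (Fin d) ℚ_[p]) :
    mVal p d i A B = sInf (candSet p d i A B) := rfl

lemma candSet_finite (i : ℕ) (A B : Matrix (Fin d) (Fin d) ℚ_[p]) :
    (candSet p d i A B).Finite := by
  classical
  apply Set.Finite.subset (Set.finite_range
    (fun Sρ : Finset (Fin d) × (Fin d → Fin d) =>
      ((Matrix.of fun j => if j ∈ Sρ.1 then A (Sρ.2 j) else B (Sρ.2 j)).det.valuation : ℤ)))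
  rintro v ⟨X, ⟨S, ρ, _, _, _, hX⟩, _, rfl⟩
  refine ⟨(S, ρ), ?_⟩
  have : X = Matrix.of fun j => if j ∈ S then A (ρ j) else B (ρ j) := by
    ext j k; rw [hX j]; rfl
  dsimp only
  rw [← this]

lemma IsCandidate.mulRight {i : ℕ} {A B X : Matrix (Fin d) (Fin d) ℚ_[p]}
    (T : Matrix (Fin d) (Fin d) ℚ_[p]) (h : IsCandidate p d i A B X) :
    IsCandidate p d i (A * T) (B * T) (X * T) := by
  obtain ⟨S, ρ, h1, h2, h3, hX⟩ := h
  refine ⟨S, ρ, h1, h2, h3, fun j => funext fun k => ?_⟩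
  by_cases hj : j ∈ S <;>
    simp [Matrix.mul_apply, hX j, hj]

lemma candSet_mulRight (i : ℕ) (A B T : Matrix (Fin d) (Fin d) ℚ_[p]) (hT : T.det ≠ 0) :
    candSet p d i (A * T) (B * T) = (fun v => v + T.det.valuation) '' candSet p d i A B := by
  have hTu : IsUnit T.det := hT.isUnit
  ext v
  constructor
  · rintro ⟨Y, hc, hdet, rfl⟩
    refine ⟨(Y * T⁻¹).det.valuation, ⟨Y * T⁻¹, ?_, ?_, rfl⟩, ?_⟩
    · have := hc.mulRight p d T⁻¹
      rwa [Matrix.mul_nonsing_inv_cancel_right _ _ hTu,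
        Matrix.mul_nonsing_inv_cancel_right _ _ hTu] at this
    · intro h0
      apply hdet
      rw [← Matrix.nonsing_inv_mul_cancel_right T Y hTu, Matrix.det_mul, h0, zero_mul]
    · have hY : Y = Y * T⁻¹ * T := (Matrix.nonsing_inv_mul_cancel_right T Y hTu).symm
      have hd : (Y * T⁻¹).det ≠ 0 := by
        intro h0
        apply hdet
        rw [hY, Matrix.det_mul, h0, zero_mul]
      show (Y * T⁻¹).det.valuation + T.det.valuation = Y.det.valuation
      conv_rhs => rw [hY, Matrix.det_mul]
      rw [Padic.valuation_mul hd hT]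
  · rintro ⟨w, ⟨X, hc, hdet, rfl⟩, rfl⟩
    exact ⟨X * T, hc.mulRight p d T, by
        rw [Matrix.det_mul]; exact mul_ne_zero hdet hT, by
        rw [Matrix.det_mul, Padic.valuation_mul hdet hT]⟩

lemma mVal_mulRight (hd' : 0 < d) (i : ℕ) (hi : i ≤ d) (A B T : Matrix (Fin d) (Fin d) ℚ_[p])
    (hA : A.det ≠ 0) (hB : B.det ≠ 0) (hT : T.det ≠ 0) :
    mVal p d i (A * T) (B * T) = mVal p d i A B + T.det.valuation := by
  have hne : (candSet p d i A B).Nonempty := by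
    obtain ⟨X, hc, hd⟩ := exists_candidate p d hd' i hi A B hA hB
    exact ⟨X.det.valuation, X, hc, hd, rfl⟩
  have hbdd : BddBelow (candSet p d i A B) := (candSet_finite p d i A B).bddBelow
  rw [mVal_def, mVal_def, candSet_mulRight p d i A B T hT]
  have := (OrderIso.addRight (T.det.valuation)).map_csInf' hne hbdd
  simp only [OrderIso.addRight_apply] at this
  rw [← this]

lemma val_p_pow (n : ℕ) : ((p : ℚ_[p]) ^ n).valuation = n := by
  induction n with
  | zero => simpa using Padic.valuation_one
  | succ n ih =>
    have hp : (p : ℚ_[p]) ≠ 0 := Nat.cast_ne_zero.2 (Fact.out (p := p.Prime)).ne_zero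
    rw [pow_succ, Padic.valuation_mul (pow_ne_zero n hp) hp, ih, Padic.valuation_p]
    push_cast; ring

end Aux


/-- **Invariance conditions (basis part).** For fixed `A, B`, with
`γ(A,B) = Σ_i a_i · m_{A:i,B:d−i}`, the following are equivalent:
(i) `γ(AT,BT) = γ(A,B)` for all `T ∈ GL_d(ℚ_p)`;
(ii) `γ(AT,BT) = γ(A,B)` for some `T ∈ GL_d(ℚ_p)` with `ν(det T) ≠ 0`;
(iii) `Σ_i a_i = 0`. -/
theorem invariance_conditions_basis (hd : 2 ≤ d) (a : ℕ → ℤ)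
    (A B : Matrix (Fin d) (Fin d) ℚ_[p]) (hA : A.det ≠ 0) (hB : B.det ≠ 0) :
    ((∀ T : Matrix (Fin d) (Fin d) ℚ_[p], T.det ≠ 0 →
        ∑ i ∈ Finset.range (d + 1), a i * mVal p d i (A * T) (B * T) =
          ∑ i ∈ Finset.range (d + 1), a i * mVal p d i A B) ↔
      ∑ i ∈ Finset.range (d + 1), a i = 0) ∧
    ((∃ T : Matrix (Fin d) (Fin d) ℚ_[p], T.det ≠ 0 ∧ T.det.valuation ≠ 0 ∧
        ∑ i ∈ Finset.range (d + 1), a i * mVal p d i (A * T) (B * T) =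
          ∑ i ∈ Finset.range (d + 1), a i * mVal p d i A B) ↔
      ∑ i ∈ Finset.range (d + 1), a i = 0) := by
  classical
  have key : ∀ T : Matrix (Fin d) (Fin d) ℚ_[p], T.det ≠ 0 →
      ∑ i ∈ Finset.range (d + 1), a i * mVal p d i (A * T) (B * T) =
        ∑ i ∈ Finset.range (d + 1), a i * mVal p d i A B
          + (∑ i ∈ Finset.range (d + 1), a i) * T.det.valuation := by
    intro T hT
    rw [Finset.sum_mul, ← Finset.sum_add_distrib]
    refine Finset.sum_congr rfl fun i hi => ?_
    rw [mVal_mulRight p d (by omega) i (Nat.lt_succ_iff.1 (Finset.mem_range.1 hi)) A B T hA hB hT, mul_add]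
  have hp : (p : ℚ_[p]) ≠ 0 := Nat.cast_ne_zero.2 (Fact.out (p := p.Prime)).ne_zero
  set T₀ : Matrix (Fin d) (Fin d) ℚ_[p] := (p : ℚ_[p]) • (1 : Matrix (Fin d) (Fin d) ℚ_[p])
    with hT₀def
  have hT₀det : T₀.det = (p : ℚ_[p]) ^ d := by
    rw [hT₀def, Matrix.det_smul, Matrix.det_one, mul_one, Fintype.card_fin]
  have hT₀ : T₀.det ≠ 0 := by rw [hT₀det]; exact pow_ne_zero _ hp
  have hT₀val : T₀.det.valuation = d := by rw [hT₀det, val_p_pow]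
  have hdz : (d : ℤ) ≠ 0 := by
    simp only [ne_eq, Nat.cast_eq_zero]
    omega
  constructor
  · constructor
    · intro h
      have h1 := key T₀ hT₀
      rw [h T₀ hT₀, hT₀val] at h1
      have h2 : (∑ i ∈ Finset.range (d + 1), a i) * (d : ℤ) = 0 := by linarith
      exact (mul_eq_zero.1 h2).resolve_right hdz
    · intro h T hT
      rw [key T hT, h, zero_mul, add_zero]
  · constructor
    · rintro ⟨T, hT, hval, heq⟩
      have h1 := key T hT
      rw [heq] at h1
      have h2 : (∑ i ∈ Finset.range (d + 1), a i) * T.det.valuation = 0 := by linarith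
      exact (mul_eq_zero.1 h2).resolve_right hval
    · intro h
      exact ⟨T₀, hT₀, by rw [hT₀val]; exact hdz,
        by rw [key T₀ hT₀, h, zero_mul, add_zero]⟩


end BT
end

section
/- For every A ∈ GL_d(ℚ_p) there exists X ∈ GL_d(ℤ_p) such that the matrix A' = X·A is in localized form. -/
open Pointwise

namespace BT

variable (p : ℕ) [Fact p.Prime] (d : ℕ)

/-- `A` is in localized form with permutation `π`: for every `i`,
(i) `A_{i,π(i)}` is an integer power of `p` whose valuation is minimal among the
valuations of the entries `A_{j,k}` with `j ≥ i` (expressed via norms, so that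
zero entries count as having valuation `∞`);
(ii) `A_{j,π(i)} = 0` for `j > i`;
(iii) `ν(A_{i,j}) > ν(A_{i,π(i)})` for `j < π(i)`. -/
def IsLocalizedWith (π : Equiv.Perm (Fin d)) (A : Matrix (Fin d) (Fin d) ℚ_[p]) : Prop :=
  (∀ i : Fin d, ∃ n : ℤ, A i (π i) = (p : ℚ_[p]) ^ n) ∧
  (∀ i j k : Fin d, i ≤ j → ‖A j k‖ ≤ ‖A i (π i)‖) ∧
  (∀ i j : Fin d, i < j → A j (π i) = 0) ∧
  (∀ i j : Fin d, j < π i → ‖A i j‖ < ‖A i (π i)‖)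

/-- `A` is in localized form. -/
def IsLocalized (A : Matrix (Fin d) (Fin d) ℚ_[p]) : Prop :=
  ∃ π : Equiv.Perm (Fin d), IsLocalizedWith p d π A

lemma norm_det_le_one (Y : Matrix (Fin d) (Fin d) ℚ_[p])
    (h : ∀ i j, ‖Y i j‖ ≤ 1) : ‖Y.det‖ ≤ 1 := by
  set M : Matrix (Fin d) (Fin d) ℤ_[p] := Matrix.of fun i j => (⟨Y i j, h i j⟩ : ℤ_[p]) with hM
  have h1 : Y = M.map (PadicInt.Coe.ringHom) := by ext i j; rfl
  have h2 := RingHom.map_det (PadicInt.Coe.ringHom) M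
  rw [RingHom.mapMatrix_apply] at h2
  rw [h1, ← h2]
  exact PadicInt.norm_le_one _

lemma inGLZp_of_inv (Y Z : Matrix (Fin d) (Fin d) ℚ_[p])
    (hY : ∀ i j, ‖Y i j‖ ≤ 1) (hZ : ∀ i j, ‖Z i j‖ ≤ 1) (h : Y * Z = 1) :
    InGLZp p d Y := by
  refine ⟨hY, ?_⟩
  have h2 : ‖Y.det‖ * ‖Z.det‖ = 1 := by
    rw [← norm_mul, ← Matrix.det_mul, h, Matrix.det_one, norm_one]
  have h3 := norm_det_le_one p d Y hY
  have h4 := norm_det_le_one p d Z hZ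
  refine le_antisymm h3 ?_
  nlinarith [norm_nonneg Y.det, norm_nonneg Z.det]

lemma inGLZp_mul (X Y : Matrix (Fin d) (Fin d) ℚ_[p])
    (hX : InGLZp p d X) (hY : InGLZp p d Y) : InGLZp p d (X * Y) := by
  refine ⟨fun i j => ?_, by rw [Matrix.det_mul, norm_mul, hX.2, hY.2, one_mul]⟩
  set M : Matrix (Fin d) (Fin d) ℤ_[p] := Matrix.of fun i j => (⟨X i j, hX.1 i j⟩ : ℤ_[p]) with hm
  set N : Matrix (Fin d) (Fin d) ℤ_[p] := Matrix.of fun i j => (⟨Y i j, hY.1 i j⟩ : ℤ_[p]) with hn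
  have h : X * Y = (M * N).map (PadicInt.Coe.ringHom) := by
    rw [Matrix.map_mul]
    congr 1
  have h2 : ‖(X * Y) i j‖ = ‖((M * N) i j : ℚ_[p])‖ := by rw [h]; rfl
  rw [h2, PadicInt.padic_norm_e_of_padicInt]
  exact PadicInt.norm_le_one _

lemma inGLZp_one : InGLZp p d 1 := by
  refine ⟨fun i j => ?_, by rw [Matrix.det_one, norm_one]⟩
  rw [Matrix.one_apply]
  split_ifs <;> simp


/-- Row operation: new row `i` is `x • (row r)`, new row `r` is old row `i`,
other rows unchanged. -/
noncomputable def swapMat (i r : Fin d) (x : ℚ_[p]) : Matrix (Fin d) (Fin d) ℚ_[p] :=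
  fun a b =>
    if a = i then (if b = r then x else 0)
    else if a = r then (if b = i then 1 else 0)
    else if a = b then 1 else 0

lemma swapMat_mul_apply (i r : Fin d) (x : ℚ_[p]) (B : Matrix (Fin d) (Fin d) ℚ_[p])
    (a k : Fin d) :
    (swapMat p d i r x * B) a k =
      if a = i then x * B r k else if a = r then B i k else B a k := by
  rw [Matrix.mul_apply]
  by_cases h1 : a = i
  · rw [if_pos h1]
    rw [Finset.sum_eq_single r]
    · simp [swapMat, h1]
    · intro b _ hb
      simp [swapMat, h1, hb]
    · simp
  · rw [if_neg h1]
    by_cases h2 : a = r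
    · have h3 : r ≠ i := by rw [← h2]; exact h1
      rw [if_pos h2]
      rw [Finset.sum_eq_single i]
      · simp [swapMat, h1, h2, h3]
      · intro b _ hb
        simp [swapMat, h1, h2, h3, hb]
      · simp
    · rw [if_neg h2]
      rw [Finset.sum_eq_single a]
      · simp [swapMat, h1, h2]
      · intro b _ hb
        simp [swapMat, h1, h2, Ne.symm hb]
      · simp

lemma swapMat_entry_norm (i r : Fin d) (x : ℚ_[p]) (hx : ‖x‖ ≤ 1) (a b : Fin d) :
    ‖swapMat p d i r x a b‖ ≤ 1 := by
  unfold swapMat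
  split_ifs <;> simp [hx]

lemma swapMat_mul_swapMat (i r : Fin d) (x y : ℚ_[p]) (hxy : x * y = 1) :
    swapMat p d i r x * swapMat p d r i y = 1 := by
  ext a b
  rw [swapMat_mul_apply, Matrix.one_apply]
  by_cases h1 : a = i
  · subst h1
    have hr : swapMat p d r a y r b = if b = a then y else 0 := by simp [swapMat]
    rw [if_pos rfl, hr]
    by_cases h2 : a = b
    · rw [if_pos h2.symm, if_pos h2, hxy]
    · rw [if_neg (fun h => h2 h.symm), mul_zero, if_neg h2]
  · rw [if_neg h1]
    by_cases h2 : a = r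
    · have h3 : r ≠ i := by rw [← h2]; exact h1
      have hr : swapMat p d r i y i b = if b = r then 1 else 0 := by
        simp [swapMat, Ne.symm h3]
      rw [if_pos h2, hr]
      subst h2
      by_cases h4 : a = b
      · rw [if_pos h4.symm, if_pos h4]
      · rw [if_neg (fun h => h4 h.symm), if_neg h4]
    · have hr : swapMat p d r i y a b = if a = b then 1 else 0 := by
        simp [swapMat, h1, h2]
      rw [if_neg h2, hr]

/-- Row operation: for `a > i`, add `e a • (row i)` to row `a`. -/
noncomputable def clearMat (i : Fin d) (e : Fin d → ℚ_[p]) : Matrix (Fin d) (Fin d) ℚ_[p] :=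
  fun a b => if a = b then 1 else if b = i ∧ i < a then e a else 0

lemma clearMat_mul_apply (i : Fin d) (e : Fin d → ℚ_[p]) (B : Matrix (Fin d) (Fin d) ℚ_[p])
    (a k : Fin d) :
    (clearMat p d i e * B) a k = B a k + if i < a then e a * B i k else 0 := by
  rw [Matrix.mul_apply]
  by_cases h1 : i < a
  · have hne : a ≠ i := fun h => absurd (h ▸ h1) (lt_irrefl i)
    rw [if_pos h1]
    rw [← Finset.sum_subset (Finset.subset_univ {a, i})]
    · rw [Finset.sum_pair hne]
      simp [clearMat, hne, h1, Ne.symm hne]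
    · intro b _ hb
      simp only [Finset.mem_insert, Finset.mem_singleton, not_or] at hb
      simp [clearMat, Ne.symm hb.1, hb.2]
  · rw [if_neg h1, add_zero]
    rw [Finset.sum_eq_single a]
    · simp [clearMat]
    · intro b _ hb
      have : ¬ (b = i ∧ i < a) := fun h => h1 h.2
      simp [clearMat, Ne.symm hb, this]
    · simp

lemma clearMat_entry_norm (i : Fin d) (e : Fin d → ℚ_[p]) (he : ∀ a, i < a → ‖e a‖ ≤ 1)
    (a b : Fin d) : ‖clearMat p d i e a b‖ ≤ 1 := by
  unfold clearMat
  split_ifs with h1 h2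
  · simp
  · exact he a h2.2
  · simp

lemma clearMat_mul_clearMat (i : Fin d) (e : Fin d → ℚ_[p]) :
    clearMat p d i e * clearMat p d i (-e) = 1 := by
  ext a b
  rw [clearMat_mul_apply, Matrix.one_apply]
  have hE : ∀ c, clearMat p d i (-e) i c = if i = c then 1 else 0 := by
    intro c
    simp [clearMat]
  by_cases h1 : i < a
  · have hne : a ≠ i := fun h => absurd (h ▸ h1) (lt_irrefl i)
    rw [if_pos h1, hE]
    by_cases h2 : b = i
    · subst h2
      simp [clearMat, hne, h1, Ne.symm hne]
    · simp [clearMat, h2, Ne.symm h2]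
  · rw [if_neg h1, add_zero]
    have : ¬ (b = i ∧ i < a) := fun h => h1 h.2
    simp [clearMat, this]


/-- Partial localization: rows `< t` are pivoted with pivot columns `c`. -/
def PL (t : ℕ) (B : Matrix (Fin d) (Fin d) ℚ_[p]) (c : Fin d → Fin d) : Prop :=
  ∀ l : Fin d, (l : ℕ) < t →
    (∃ n : ℤ, B l (c l) = (p : ℚ_[p]) ^ n) ∧
    (∀ j k : Fin d, l ≤ j → ‖B j k‖ ≤ ‖B l (c l)‖) ∧
    (∀ j : Fin d, l < j → B j (c l) = 0) ∧
    (∀ j : Fin d, j < c l → ‖B l j‖ < ‖B l (c l)‖)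

lemma step (t : ℕ) (ht : t < d) (B : Matrix (Fin d) (Fin d) ℚ_[p]) (hdet : B.det ≠ 0)
    (c : Fin d → Fin d) (hPL : PL p d t B c) :
    ∃ (Y : Matrix (Fin d) (Fin d) ℚ_[p]) (c' : Fin d → Fin d),
      InGLZp p d Y ∧ PL p d (t + 1) (Y * B) c' := by
  classical
  set i : Fin d := ⟨t, ht⟩ with hi
  -- row i of B is nonzero
  have hrow : ∃ k, B i k ≠ 0 := by
    by_contra h
    push_neg at h
    exact hdet (Matrix.det_eq_zero_of_row_eq_zero i h)
  obtain ⟨k₀, hk₀⟩ := hrow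
  -- pick a global max entry among rows ≥ i
  have hSne : (Finset.univ.filter (fun q : Fin d × Fin d => i ≤ q.1)).Nonempty :=
    ⟨(i, k₀), by simp⟩
  obtain ⟨⟨r, c₁⟩, hrc, hmax'⟩ :=
    Finset.exists_max_image _ (fun q : Fin d × Fin d => ‖B q.1 q.2‖) hSne
  have hir : i ≤ r := by simpa using hrc
  set M : ℝ := ‖B r c₁‖ with hM
  have hmax : ∀ j k : Fin d, i ≤ j → ‖B j k‖ ≤ M := by
    intro j k hj
    exact hmax' (j, k) (by simpa using hj)
  have hMpos : 0 < M :=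
    lt_of_lt_of_le (norm_pos_iff.mpr hk₀) (hmax i k₀ le_rfl)
  -- leftmost column of row r achieving the max
  set T : Finset (Fin d) := Finset.univ.filter (fun k => M ≤ ‖B r k‖) with hT
  have hTne : T.Nonempty := ⟨c₁, by simp [hT, hM]⟩
  set c₀ : Fin d := T.min' hTne with hc₀
  have hc₀T : c₀ ∈ T := T.min'_mem hTne
  have hMc₀ : ‖B r c₀‖ = M := by
    refine le_antisymm (hmax r c₀ hir) ?_
    simpa [hT] using hc₀T
  have hleft : ∀ k : Fin d, k < c₀ → ‖B r k‖ < M := by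
    intro k hk
    by_contra h
    push_neg at h
    exact absurd (T.min'_le k (by simpa [hT] using h)) (not_le.mpr hk)
  -- pivot value
  set v : ℚ_[p] := B r c₀ with hv
  have hv0 : v ≠ 0 := by
    intro h
    rw [h, norm_zero] at hMc₀
    exact absurd hMc₀.symm (ne_of_gt hMpos)
  set n : ℤ := v.valuation with hn
  have hp0 : (p : ℚ_[p]) ≠ 0 := Nat.cast_ne_zero.mpr (Fact.out (p := p.Prime)).ne_zero
  have hpn0 : ((p : ℚ_[p]) ^ n) ≠ 0 := zpow_ne_zero n hp0
  have hvn : ‖v‖ = ‖(p : ℚ_[p]) ^ n‖ := by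
    rw [Padic.norm_eq_zpow_neg_valuation hv0, Padic.norm_p_zpow]
  set u : ℚ_[p] := v / (p : ℚ_[p]) ^ n with hu
  have hu1 : ‖u‖ = 1 := by
    rw [hu, norm_div, ← hvn, div_self (norm_ne_zero_iff.mpr hv0)]
  have hu0 : u ≠ 0 := by
    intro h; rw [h, norm_zero] at hu1; exact zero_ne_one hu1
  have huinv : ‖u⁻¹‖ = 1 := by rw [norm_inv, hu1, inv_one]
  -- the two row operations
  set B1 : Matrix (Fin d) (Fin d) ℚ_[p] := swapMat p d i r u⁻¹ * B with hB1def
  have hB1 : ∀ a k, B1 a k =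
      if a = i then u⁻¹ * B r k else if a = r then B i k else B a k := by
    intro a k; rw [hB1def, swapMat_mul_apply]
  set e : Fin d → ℚ_[p] := fun a => -(B1 a c₀ / (p : ℚ_[p]) ^ n) with he
  set B2 : Matrix (Fin d) (Fin d) ℚ_[p] := clearMat p d i e * B1 with hB2def
  have hB2 : ∀ a k, B2 a k = B1 a k + if i < a then e a * B1 i k else 0 := by
    intro a k; rw [hB2def, clearMat_mul_apply]
  -- norms of rows ≥ i of B1 are controlled by norms of rows ≥ i of B
  have hB1le : ∀ (k : Fin d) (C : ℝ), (∀ j, i ≤ j → ‖B j k‖ ≤ C) →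
      ∀ a, i ≤ a → ‖B1 a k‖ ≤ C := by
    intro k C hC a ha
    rw [hB1 a k]
    split_ifs with h1 h2
    · rw [norm_mul, huinv, one_mul]; exact hC r hir
    · exact hC i le_rfl
    · exact hC a ha
  have hB1zero : ∀ (k : Fin d), (∀ j, i ≤ j → B j k = 0) →
      ∀ a, i ≤ a → B1 a k = 0 := by
    intro k hC a ha
    rw [hB1 a k]
    split_ifs with h1 h2
    · rw [hC r hir, mul_zero]
    · exact hC i le_rfl
    · exact hC a ha
  have heb : ∀ a, i < a → ‖e a‖ ≤ 1 := by
    intro a ha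
    rw [he]
    simp only [norm_neg, norm_div]
    rw [div_le_one (by rw [← hvn, hMc₀]; exact hMpos)]
    rw [← hvn, hMc₀]
    exact hB1le c₀ M (fun j hj => hmax j c₀ hj) a (le_of_lt ha)
  have hB2le : ∀ (k : Fin d) (C : ℝ), (∀ j, i ≤ j → ‖B j k‖ ≤ C) →
      ∀ a, i ≤ a → ‖B2 a k‖ ≤ C := by
    intro k C hC a ha
    rw [hB2 a k]
    by_cases h1 : i < a
    · rw [if_pos h1]
      refine le_trans (Padic.nonarchimedean _ _) (max_le (hB1le k C hC a ha) ?_)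
      rw [norm_mul]
      calc ‖e a‖ * ‖B1 i k‖ ≤ 1 * C :=
            mul_le_mul (heb a h1) (hB1le k C hC i le_rfl) (norm_nonneg _)
              zero_le_one
        _ = C := one_mul C
    · rw [if_neg h1, add_zero]
      exact hB1le k C hC a ha
  have hB2zero : ∀ (k : Fin d), (∀ j, i ≤ j → B j k = 0) →
      ∀ a, i ≤ a → B2 a k = 0 := by
    intro k hC a ha
    rw [hB2 a k, hB1zero k hC a ha, zero_add]
    split_ifs with h1
    · rw [hB1zero k hC i le_rfl, mul_zero]
    · rfl
  -- rows < i are unchanged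
  have hri : ∀ a : Fin d, a < i → a ≠ r := by
    intro a ha h
    exact absurd (lt_of_lt_of_le ha hir) (h ▸ lt_irrefl a)
  have hold : ∀ a : Fin d, a < i → ∀ k, B2 a k = B a k := by
    intro a ha k
    rw [hB2 a k, if_neg (lt_asymm ha), add_zero, hB1 a k,
      if_neg (ne_of_lt ha), if_neg (hri a ha)]
  -- row i of B2
  have hB2i : ∀ k, B2 i k = u⁻¹ * B r k := by
    intro k
    rw [hB2 i k, if_neg (lt_irrefl i), add_zero, hB1 i k, if_pos rfl]
  have huv : u⁻¹ * v = (p : ℚ_[p]) ^ n := by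
    rw [hu]
    field_simp
  have hpiv : B2 i c₀ = (p : ℚ_[p]) ^ n := by
    rw [hB2i c₀, ← hv, huv]
  have hpivnorm : ‖B2 i c₀‖ = M := by
    rw [hpiv, ← hvn]
    exact hMc₀
  -- column c₀ is cleared below row i
  have hclear : ∀ j : Fin d, i < j → B2 j c₀ = 0 := by
    intro j hj
    rw [hB2 j c₀, if_pos hj, hB1 i c₀, if_pos rfl, ← hv, huv, he]
    field_simp
    ring
  -- the new pivot map
  set c' : Fin d → Fin d := Function.update c i c₀ with hc'
  refine ⟨clearMat p d i e * swapMat p d i r u⁻¹, c', ?_, ?_⟩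
  · -- InGLZp
    refine inGLZp_mul p d _ _ ?_ ?_
    · refine inGLZp_of_inv p d _ (clearMat p d i (-e)) ?_ ?_ (clearMat_mul_clearMat p d i e)
      · exact clearMat_entry_norm p d i e heb
      · refine clearMat_entry_norm p d i (-e) ?_
        intro a ha
        rw [Pi.neg_apply, norm_neg]
        exact heb a ha
    · refine inGLZp_of_inv p d _ (swapMat p d r i u) ?_ ?_
        (swapMat_mul_swapMat p d i r u⁻¹ u (inv_mul_cancel₀ hu0))
      · exact swapMat_entry_norm p d i r u⁻¹ (le_of_eq huinv)
      · exact swapMat_entry_norm p d r i u (le_of_eq hu1)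
  · -- PL (t+1)
    have hmulB : clearMat p d i e * swapMat p d i r u⁻¹ * B = B2 := by
      rw [Matrix.mul_assoc, ← hB1def, ← hB2def]
    rw [hmulB]
    intro l hl
    rcases Nat.lt_or_ge (l : ℕ) t with hlt | hge
    · -- old pivot rows
      have hli : l < i := hlt
      have hlne : l ≠ i := ne_of_lt hli
      have hcl : c' l = c l := Function.update_of_ne hlne c₀ c
      obtain ⟨h1, h2, h3, h4⟩ := hPL l hlt
      have hBl : ∀ k, B2 l k = B l k := hold l hli
      refine ⟨?_, ?_, ?_, ?_⟩
      · rw [hcl, hBl]; exact h1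
      · intro j k hj
        rw [hcl, hBl]
        rcases lt_or_ge j i with hji | hij
        · rw [hold j hji]
          exact h2 j k hj
        · exact hB2le k ‖B l (c l)‖ (fun j' hj' => h2 j' k (le_of_lt (lt_of_lt_of_le hli hj'))) j hij
      · intro j hj
        rw [hcl]
        rcases lt_or_ge j i with hji | hij
        · rw [hold j hji]
          exact h3 j hj
        · exact hB2zero (c l) (fun j' hj' => h3 j' (lt_of_lt_of_le hli hj')) j hij
      · intro j hj
        rw [hcl] at hj ⊢
        rw [hBl, hBl]
        exact h4 j hj
    · -- the new pivot row l = i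
      have hlv : (l : ℕ) = t := Nat.le_antisymm (Nat.lt_succ_iff.mp hl) hge
      have hli : l = i := Fin.ext hlv
      rw [hli]
      have hcl : c' i = c₀ := Function.update_self i c₀ c
      rw [hcl]
      refine ⟨⟨n, hpiv⟩, ?_, hclear, ?_⟩
      · intro j k hj
        rw [hpivnorm]
        exact hB2le k M (fun j' hj' => hmax j' k hj') j hj
      · intro j hj
        rw [hpivnorm, hB2i j, norm_mul, huinv, one_mul]
        exact hleft j hj


lemma main (A : Matrix (Fin d) (Fin d) ℚ_[p]) (hA : A.det ≠ 0) :
    ∀ t, t ≤ d → ∃ (X : Matrix (Fin d) (Fin d) ℚ_[p]) (c : Fin d → Fin d),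
      InGLZp p d X ∧ PL p d t (X * A) c := by
  intro t
  induction t with
  | zero =>
    exact fun _ => ⟨1, id, inGLZp_one p d,
      fun l hl => absurd hl (Nat.not_lt_zero _)⟩
  | succ t ih =>
    intro h
    obtain ⟨X, c, hX, hPL⟩ := ih (Nat.le_of_succ_le h)
    have hXdet : X.det ≠ 0 := by
      intro h0
      have h1 := hX.2
      rw [h0, norm_zero] at h1
      exact zero_ne_one h1
    have hdet : (X * A).det ≠ 0 := by
      rw [Matrix.det_mul]
      exact mul_ne_zero hXdet hA
    obtain ⟨Y, c', hY, hPL'⟩ := step p d t (Nat.lt_of_succ_le h) (X * A) hdet c hPL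
    exact ⟨Y * X, c', inGLZp_mul p d Y X hY hX, by rw [Matrix.mul_assoc]; exact hPL'⟩

/-- **Existence of a localized representative.** Every `A ∈ GL_d(ℚ_p)` can be put
in localized form by left multiplication by some `X ∈ GL_d(ℤ_p)`. -/
theorem exists_localized_form (hd : 2 ≤ d) (A : Matrix (Fin d) (Fin d) ℚ_[p])
    (hA : A.det ≠ 0) :
    ∃ X : Matrix (Fin d) (Fin d) ℚ_[p], InGLZp p d X ∧ IsLocalized p d (X * A) := by
  obtain ⟨X, c, hX, hPL⟩ := main p d A hA d le_rfl
  have hp0 : (p : ℚ_[p]) ≠ 0 := Nat.cast_ne_zero.mpr (Fact.out (p := p.Prime)).ne_zero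
  have key : ∀ l l' : Fin d, l < l' → c l ≠ c l' := by
    intro l l' hlt h
    have h3 := (hPL l l.isLt).2.2.1 l' hlt
    obtain ⟨n, hn⟩ := (hPL l' l'.isLt).1
    rw [← h, h3] at hn
    exact zpow_ne_zero n hp0 hn.symm
  have hinj : Function.Injective c := by
    intro l l' h
    by_contra hne
    rcases lt_or_gt_of_ne hne with hlt | hlt
    · exact key l l' hlt h
    · exact key l' l hlt h.symm
  set π : Equiv.Perm (Fin d) := Equiv.ofBijective c (Finite.injective_iff_bijective.mp hinj)
    with hπ
  have hπa : ∀ l, π l = c l := fun l => rfl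
  refine ⟨X, hX, π, ?_, ?_, ?_, ?_⟩
  · intro l
    rw [hπa]
    exact (hPL l l.isLt).1
  · intro l j k hj
    rw [hπa]
    exact (hPL l l.isLt).2.1 j k hj
  · intro l j hj
    rw [hπa]
    exact (hPL l l.isLt).2.2.1 j hj
  · intro l j hj
    rw [hπa] at hj ⊢
    exact (hPL l l.isLt).2.2.2 j hj

end BT
end
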